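/- arXiv:2508.21683 — 2 statements merged into one kernel-verified Lean document; each statement's English description precedes it below -/
import Mathlib

section
/- For r = 2 and all m, n ≥ 1, card(Ĥ²_{m+1,n+2}) + card(Ĥ²_{m,n}) = card(Ĥ²_{m+1,n+1}). -/
open scoped Classical

/-- For a binary string `ε` of length `N`, `D2 ε j` is
`#{i ≤ j : ε_i = 0} − #{i ≤ j : ε_i = 1}` over the first `j` entries. -/
def D2 {N : ℕ} (ε : Fin N → Fin 2) (j : ℕ) : ℤ :=
  ((Finset.univ.filter fun i : Fin N => (i : ℕ) < j ∧ ε i = 0).card : ℤ) -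
    ((Finset.univ.filter fun i : Fin N => (i : ℕ) < j ∧ ε i = 1).card : ℤ)

/-- `ε` encodes a leading hump of order `m`: `D_j ≥ 0` for all `j ≤ 2m`,
`D_{2m} = 0`, and `ε_j = 1` whenever `D_j = 0`. -/
def IsLeadingHump (m : ℕ) (ε : Fin (2 * m) → Fin 2) : Prop :=
  (∀ j, 1 ≤ j → j ≤ 2 * m → 0 ≤ D2 ε j) ∧ D2 ε (2 * m) = 0 ∧
    ∀ j (hj : 1 ≤ j) (hj' : j ≤ 2 * m), D2 ε j = 0 → ε ⟨j - 1, by omega⟩ = 1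

/-- `Ĥ²_{m,n}`: the set of binary strings of length `2m` encoding leading
humps of order `m` and generation `n`. -/
noncomputable def H2 (m n : ℕ) : Finset (Fin (2 * m) → Fin 2) :=
  Finset.univ.filter fun ε => IsLeadingHump m ε ∧
    ((Finset.Icc 1 (2 * m)).filter fun j => D2 ε j = 0).card = n

/-!
For a nonnegative path (`0` an up step, `1` a down step) the last condition in `IsLeadingHump`
is automatic, so `Ĥ²_{m,n}` is the set of Dyck paths of semilength `m` with `n` returns to the
axis. Split `Ĥ²_{m+1,n+1}` according to the height at time `2m`. If it is `0`, the path ends with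
a peak, and deleting that peak is a bijection onto `Ĥ²_{m,n}`. Otherwise the height at `2m` is `2`
and the last primitive component is `U P D` with `P` nonempty; inserting a down step at the last
visit `u ≤ 2m` to height `1` (and dropping the final down step) cuts it into two primitive
components, which is a bijection onto `Ĥ²_{m+1,n+2}` whose inverse merges the last two
components.
-/

variable {N : ℕ}

lemma D2_zero (ε : Fin N → Fin 2) : D2 ε 0 = 0 := by
  simp [D2]

lemma D2_eq_sum (ε : Fin N → Fin 2) (j : ℕ) :
    D2 ε j = ∑ i : Fin N, if (i : ℕ) < j then (if ε i = 0 then 1 else -1) else 0 := by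
  rw [D2, Finset.card_filter, Finset.card_filter]
  push_cast
  rw [← Finset.sum_sub_distrib]
  refine Finset.sum_congr rfl fun i _ => ?_
  rcases Fin.exists_fin_two.mp ⟨ε i, rfl⟩ with h | h <;> split_ifs <;> simp_all

lemma D2_succ (ε : Fin N → Fin 2) (j : ℕ) (hj : j < N) :
    D2 ε (j + 1) = D2 ε j + if ε ⟨j, hj⟩ = 0 then 1 else -1 := by
  rw [D2_eq_sum, D2_eq_sum,
    ← Fintype.sum_ite_eq' (⟨j, hj⟩ : Fin N) fun i => if ε i = 0 then (1 : ℤ) else -1,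
    ← Finset.sum_add_distrib]
  refine Finset.sum_congr rfl fun i _ => ?_
  have := Fin.ext_iff (a := i) (b := ⟨j, hj⟩)
  split_ifs <;> simp_all <;> omega

lemma D2_succ_of_eq_zero {ε : Fin N → Fin 2} {j : ℕ} {hj : j < N} (h : ε ⟨j, hj⟩ = 0) :
    D2 ε (j + 1) = D2 ε j + 1 := by
  simp [D2_succ ε j hj, h]

lemma D2_succ_of_eq_one {ε : Fin N → Fin 2} {j : ℕ} {hj : j < N} (h : ε ⟨j, hj⟩ = 1) :
    D2 ε (j + 1) = D2 ε j - 1 := by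
  simp [D2_succ ε j hj, h, sub_eq_add_neg]

lemma D2_succ_eq_or (ε : Fin N → Fin 2) {j : ℕ} (hj : j < N) :
    D2 ε (j + 1) = D2 ε j + 1 ∨ D2 ε (j + 1) = D2 ε j - 1 := by
  rcases Fin.exists_fin_two.mp ⟨ε ⟨j, hj⟩, rfl⟩ with h | h
  exacts [.inl (D2_succ_of_eq_zero h), .inr (D2_succ_of_eq_one h)]

lemma eq_zero_of_D2_succ {ε : Fin N → Fin 2} {j : ℕ} {hj : j < N}
    (h : D2 ε (j + 1) = D2 ε j + 1) : ε ⟨j, hj⟩ = 0 := by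
  rcases Fin.exists_fin_two.mp ⟨ε ⟨j, hj⟩, rfl⟩ with h' | h'
  · exact h'
  · have := D2_succ_of_eq_one h'; omega

lemma eq_one_of_D2_succ {ε : Fin N → Fin 2} {j : ℕ} {hj : j < N}
    (h : D2 ε (j + 1) = D2 ε j - 1) : ε ⟨j, hj⟩ = 1 := by
  rcases Fin.exists_fin_two.mp ⟨ε ⟨j, hj⟩, rfl⟩ with h' | h'
  · have := D2_succ_of_eq_zero h'; omega
  · exact h'

lemma D2_congr {M : ℕ} {ε : Fin N → Fin 2} {η : Fin M → Fin 2} {j : ℕ} (hN : j ≤ N)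
    (hM : j ≤ M) (h : ∀ i (hi : i < j), ε ⟨i, by omega⟩ = η ⟨i, by omega⟩) :
    D2 ε j = D2 η j := by
  induction j with
  | zero => rw [D2_zero, D2_zero]
  | succ j ih =>
    rw [D2_succ ε j hN, D2_succ η j hM, h j j.lt_succ_self,
      ih (by omega) (by omega) fun i hi => h i (by omega)]

structure IsDyckPath (ε : Fin N → Fin 2) : Prop where
  nonneg : ∀ j ≤ N, 0 ≤ D2 ε j
  D2_length : D2 ε N = 0

def returns (ε : Fin N → Fin 2) : Finset ℕ :=
  (Finset.Icc 1 N).filter fun j => D2 ε j = 0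

namespace IsDyckPath

variable {ε : Fin N → Fin 2}

lemma D2_eq_one_of_D2_succ_eq_zero (hε : IsDyckPath ε) {j : ℕ} (hj : j < N)
    (h : D2 ε (j + 1) = 0) : D2 ε j = 1 := by
  have := hε.nonneg j hj.le
  have := D2_succ_eq_or ε hj
  omega

lemma eq_one_of_D2_succ_eq_zero (hε : IsDyckPath ε) {j : ℕ} (hj : j < N)
    (h : D2 ε (j + 1) = 0) : ε ⟨j, hj⟩ = 1 :=
  eq_one_of_D2_succ (by rw [h, hε.D2_eq_one_of_D2_succ_eq_zero hj h]; rfl)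

lemma last_eq_one (hε : IsDyckPath ε) (hN : 0 < N) : ε ⟨N - 1, by omega⟩ = 1 :=
  hε.eq_one_of_D2_succ_eq_zero _ (by rw [Nat.sub_add_cancel hN]; exact hε.D2_length)

end IsDyckPath

lemma isLeadingHump_iff {m : ℕ} {ε : Fin (2 * m) → Fin 2} :
    IsLeadingHump m ε ↔ IsDyckPath ε := by
  refine ⟨fun ⟨hnn, hend, _⟩ => ⟨fun j hj => ?_, hend⟩,
    fun hε => ⟨fun j _ hj => hε.nonneg j hj, hε.D2_length, fun j hj _ h => ?_⟩⟩
  · rcases Nat.eq_zero_or_pos j with rfl | hj0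
    · rw [D2_zero]
    · exact hnn j hj0 hj
  · obtain ⟨k, rfl⟩ := Nat.exists_eq_add_of_le' hj
    exact hε.eq_one_of_D2_succ_eq_zero (by omega) h

lemma mem_H2 {m n : ℕ} {ε : Fin (2 * m) → Fin 2} :
    ε ∈ H2 m n ↔ IsDyckPath ε ∧ (returns ε).card = n := by
  simp [H2, returns, isLeadingHump_iff]

section AppendPeak

variable {K : ℕ}

def appendPeak (ε : Fin K → Fin 2) : Fin N → Fin 2 :=
  fun j => if h : (j : ℕ) < K then ε ⟨j, h⟩ else if (j : ℕ) = K then 0 else 1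

lemma D2_take (ε : Fin N → Fin 2) (hKN : K ≤ N) {j : ℕ} (hj : j ≤ K) :
    D2 (Fin.take K hKN ε) j = D2 ε j :=
  D2_congr hj (by omega) fun _ _ => rfl

variable (ε : Fin K → Fin 2) (hN : N = K + 2)
include hN

lemma D2_appendPeak_of_le {j : ℕ} (hj : j ≤ K) :
    D2 (appendPeak ε : Fin N → Fin 2) j = D2 ε j :=
  D2_congr (by omega) hj fun i hi => by simp [appendPeak, show i < K by omega]

lemma D2_appendPeak_succ : D2 (appendPeak ε : Fin N → Fin 2) (K + 1) = D2 ε K + 1 := by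
  rw [D2_succ_of_eq_zero (hj := by omega) (by simp [appendPeak]), D2_appendPeak_of_le ε hN le_rfl]

lemma D2_appendPeak_length : D2 (appendPeak ε : Fin N → Fin 2) N = D2 ε K := by
  subst hN
  rw [D2_succ_of_eq_one (hj := by omega) (by simp [appendPeak]), D2_appendPeak_succ ε rfl]
  ring

lemma IsDyckPath.isDyckPath_appendPeak (hε : IsDyckPath ε) :
    IsDyckPath (appendPeak ε : Fin N → Fin 2) := by
  refine ⟨fun j hj => ?_, by rw [D2_appendPeak_length ε hN, hε.D2_length]⟩
  rcases Nat.lt_or_ge K j with hKj | hjK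
  · rcases (show j = K + 1 ∨ j = N by omega) with rfl | rfl
    · rw [D2_appendPeak_succ ε hN, hε.D2_length]; norm_num
    · rw [D2_appendPeak_length ε hN, hε.D2_length]
  · rw [D2_appendPeak_of_le ε hN hjK]; exact hε.nonneg j hjK

lemma returns_appendPeak (hε : IsDyckPath ε) :
    returns (appendPeak ε : Fin N → Fin 2) = insert N (returns ε) := by
  ext j
  simp only [returns, Finset.mem_insert, Finset.mem_filter, Finset.mem_Icc]
  rcases Nat.lt_or_ge K j with hKj | hjK
  · rcases (show j = K + 1 ∨ j = N ∨ N < j by omega) with rfl | rfl | hNj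
    · rw [D2_appendPeak_succ ε hN, hε.D2_length]; omega
    · rw [D2_appendPeak_length ε hN, hε.D2_length]; simp; omega
    · omega
  · rw [D2_appendPeak_of_le ε hN hjK]; omega

lemma card_returns_appendPeak (hε : IsDyckPath ε) :
    (returns (appendPeak ε : Fin N → Fin 2)).card = (returns ε).card + 1 := by
  rw [returns_appendPeak ε hN hε, Finset.card_insert_of_notMem]
  simp [returns]; omega

lemma take_appendPeak : Fin.take K (by omega) (appendPeak ε : Fin N → Fin 2) = ε := by
  ext i
  simp [appendPeak, Fin.take_apply]

end AppendPeak

lemma appendPeak_take {K : ℕ} {ε : Fin N → Fin 2} (hε : IsDyckPath ε) (hN : N = K + 2)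
    (hK : D2 ε K = 0) : appendPeak (Fin.take K (by omega) ε) = ε := by
  subst hN
  have hpeak : D2 ε (K + 1) = 1 := hε.D2_eq_one_of_D2_succ_eq_zero (by omega) hε.D2_length
  ext j
  simp only [appendPeak, Fin.take_apply]
  split_ifs with h1 h2
  · rfl
  · have : j = ⟨K, by omega⟩ := Fin.ext h2
    rw [this, eq_zero_of_D2_succ (ε := ε) (j := K) (by rw [hpeak, hK]; rfl)]
  · have : j = ⟨K + 2 - 1, by omega⟩ := Fin.ext (by simp; omega)
    rw [this, hε.last_eq_one (by omega)]

lemma IsDyckPath.isDyckPath_take {K : ℕ} {ε : Fin N → Fin 2} (hε : IsDyckPath ε)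
    (hKN : K ≤ N) (hK : D2 ε K = 0) : IsDyckPath (Fin.take K hKN ε) :=
  ⟨fun j hj => (D2_take ε hKN hj).symm ▸ hε.nonneg j (by omega),
    (D2_take ε hKN le_rfl).trans hK⟩

lemma card_filter_H2_D2_eq_zero (m n : ℕ) :
    ((H2 (m + 1) (n + 1)).filter fun ε => D2 ε (2 * m) = 0).card = (H2 m n).card := by
  have hN : 2 * (m + 1) = 2 * m + 2 := by ring
  have hKN : 2 * m ≤ 2 * (m + 1) := by omega
  refine Finset.card_nbij' (Fin.take (2 * m) hKN) appendPeak (fun ε hε => ?_)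
    (fun ε hε => ?_) (fun ε hε => ?_) (fun ε hε => take_appendPeak ε hN)
  · simp only [Finset.mem_coe, Finset.mem_filter, mem_H2] at hε ⊢
    obtain ⟨⟨hε, hret⟩, hK⟩ := hε
    refine ⟨hε.isDyckPath_take hKN hK, ?_⟩
    have := card_returns_appendPeak _ hN (hε.isDyckPath_take hKN hK)
    rw [appendPeak_take hε hN hK] at this
    omega
  · simp only [Finset.mem_coe, Finset.mem_filter, mem_H2] at hε ⊢
    obtain ⟨hε, hret⟩ := hε
    exact ⟨⟨hε.isDyckPath_appendPeak ε hN, by rw [card_returns_appendPeak ε hN hε, hret]⟩,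
      by rw [D2_appendPeak_of_le ε hN le_rfl, hε.D2_length]⟩
  · simp only [Finset.mem_coe, Finset.mem_filter, mem_H2] at hε
    exact appendPeak_take hε.1.1 hN hε.2

section InsertDown

def insertDown (ε : Fin N → Fin 2) (u : ℕ) : Fin N → Fin 2 :=
  fun j => if (j : ℕ) < u then ε j else if (j : ℕ) = u then 1 else ε ⟨j - 1, by omega⟩

def eraseStep (η : Fin N → Fin 2) (d : ℕ) : Fin N → Fin 2 :=
  fun j => if h : (j : ℕ) + 1 < N then (if (j : ℕ) < d then η j else η ⟨j + 1, h⟩) else 1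

variable (ε : Fin N → Fin 2) {u : ℕ}

lemma D2_insertDown_of_le {j : ℕ} (hju : j ≤ u) (hjN : j ≤ N) :
    D2 (insertDown ε u) j = D2 ε j :=
  D2_congr hjN hjN fun i hi => by simp [insertDown, show i < u by omega]

lemma D2_insertDown_succ {j : ℕ} (huj : u ≤ j) (hjN : j < N) :
    D2 (insertDown ε u) (j + 1) = D2 ε j - 1 := by
  induction j, huj using Nat.le_induction with
  | base =>
    rw [D2_succ_of_eq_one (hj := hjN) (by simp [insertDown]),
      D2_insertDown_of_le ε le_rfl hjN.le]
  | succ j huj ih =>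
    rw [D2_succ _ _ hjN, ih (by omega), D2_succ ε j (by omega)]
    simp [insertDown, show ¬ j + 1 < u by omega, show j + 1 ≠ u by omega]
    ring

lemma D2_insertDown_of_lt {j : ℕ} (huj : u < j) (hjN : j ≤ N) :
    D2 (insertDown ε u) j = D2 ε (j - 1) - 1 := by
  obtain ⟨i, rfl⟩ := Nat.exists_eq_add_of_lt huj
  exact D2_insertDown_succ ε (by omega) (by omega)

lemma eraseStep_insertDown (hN : 0 < N) (hlast : ε ⟨N - 1, by omega⟩ = 1) :
    eraseStep (insertDown ε u) u = ε := by
  ext j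
  by_cases hj : (j : ℕ) + 1 < N
  · by_cases hju : (j : ℕ) < u
    · simp [eraseStep, insertDown, hj, hju]
    · simp [eraseStep, insertDown, hj, hju, show ¬ (j : ℕ) + 1 < u by omega,
        show (j : ℕ) + 1 ≠ u by omega]
  · obtain rfl : j = ⟨N - 1, Nat.sub_lt hN Nat.one_pos⟩ := Fin.ext (by simp; omega)
    simp [eraseStep, show ¬ N - 1 + 1 < N by omega, hlast]

lemma insertDown_eraseStep {d : ℕ} (hd : d < N) (h : ε ⟨d, hd⟩ = 1) :
    insertDown (eraseStep ε d) d = ε := by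
  ext j
  rcases lt_trichotomy (j : ℕ) d with hjd | hjd | hjd
  · simp [insertDown, eraseStep, hjd, show (j : ℕ) + 1 < N by omega]
  · obtain rfl : j = ⟨d, hd⟩ := Fin.ext hjd
    simp [insertDown, h]
  · simp [insertDown, eraseStep, show ¬ (j : ℕ) < d by omega, show (j : ℕ) ≠ d by omega,
      show ¬ (j : ℕ) - 1 < d by omega,
      show (j : ℕ) - 1 + 1 = j by omega]

lemma eraseStep_last (hN : 0 < N) (d : ℕ) : eraseStep ε d ⟨N - 1, by omega⟩ = 1 := by
  simp [eraseStep, show ¬ N - 1 + 1 < N by omega]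

end InsertDown

section LastAtMost

noncomputable def lastAtMost (ε : Fin N → Fin 2) (c : ℤ) (K : ℕ) : ℕ :=
  Nat.findGreatest (fun j => D2 ε j ≤ c) K

variable {ε : Fin N → Fin 2} {c : ℤ} {K : ℕ}

lemma lastAtMost_le (ε : Fin N → Fin 2) (c : ℤ) (K : ℕ) : lastAtMost ε c K ≤ K :=
  Nat.findGreatest_le K

lemma D2_lastAtMost_le (hc : 0 ≤ c) : D2 ε (lastAtMost ε c K) ≤ c :=
  Nat.findGreatest_spec (P := fun j => D2 ε j ≤ c) (Nat.zero_le K) (by rwa [D2_zero])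

lemma le_lastAtMost {j : ℕ} (hjK : j ≤ K) (hj : D2 ε j ≤ c) : j ≤ lastAtMost ε c K :=
  Nat.le_findGreatest hjK hj

lemma lt_D2_of_lastAtMost_lt {j : ℕ} (hj : lastAtMost ε c K < j) (hjK : j ≤ K) : c < D2 ε j :=
  not_le.mp (Nat.findGreatest_is_greatest hj hjK)

lemma lastAtMost_eq {u : ℕ} (huK : u ≤ K) (hu : D2 ε u ≤ c)
    (hgt : ∀ j, u < j → j ≤ K → c < D2 ε j) : lastAtMost ε c K = u :=
  Nat.findGreatest_eq_iff.mpr ⟨huK, fun _ => hu, fun j h1 h2 => not_le.mpr (hgt j h1 h2)⟩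

end LastAtMost

section SplitLast

variable {K : ℕ}

noncomputable def splitLast (K : ℕ) (ε : Fin N → Fin 2) : Fin N → Fin 2 :=
  insertDown ε (lastAtMost ε 1 K)

-- Erases the down step that ends at the last return before time `K + 2`.
noncomputable def mergeLast (K : ℕ) (η : Fin N → Fin 2) : Fin N → Fin 2 :=
  eraseStep η (lastAtMost η 0 (K + 1) - 1)

variable {ε : Fin N → Fin 2} (hN : N = K + 2) (hε : IsDyckPath ε) (hK : D2 ε K ≠ 0)
include hN hε hK

lemma IsDyckPath.D2_lastAtMost_one :
    D2 ε (lastAtMost ε 1 K) = 1 ∧ lastAtMost ε 1 K < K ∧ D2 ε (K + 1) = 1 := by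
  subst hN
  have hK1 : D2 ε (K + 1) = 1 := hε.D2_eq_one_of_D2_succ_eq_zero (by omega) hε.D2_length
  have hK2 : D2 ε K = 2 := by have := D2_succ_eq_or ε (j := K) (by omega); omega
  have hu := D2_lastAtMost_le (ε := ε) (K := K) zero_le_one
  have huK : lastAtMost ε 1 K < K :=
    (lastAtMost_le ε 1 K).lt_of_ne fun h => by rw [h] at hu; omega
  have := lt_D2_of_lastAtMost_lt (ε := ε) (c := 1) (Nat.lt_add_one _) huK
  have := D2_succ_eq_or ε (j := lastAtMost ε 1 K) (by omega)
  exact ⟨by omega, huK, hK1⟩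

lemma IsDyckPath.D2_of_lastAtMost_le {i : ℕ} (hi : lastAtMost ε 1 K ≤ i) (hiK : i ≤ K + 1) :
    1 ≤ D2 ε i ∧ (D2 ε i = 1 ↔ i = lastAtMost ε 1 K ∨ i = K + 1) := by
  obtain ⟨hu, -, hK1⟩ := hε.D2_lastAtMost_one hN hK
  rcases (show i = lastAtMost ε 1 K ∨ i = K + 1 ∨ lastAtMost ε 1 K < i ∧ i ≤ K by omega)
    with rfl | rfl | ⟨hi, hiK⟩
  · simp [hu]
  · simp [hK1]
  · have := lt_D2_of_lastAtMost_lt hi hiK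
    omega

lemma IsDyckPath.D2_splitLast_of_lt {j : ℕ} (hj : lastAtMost ε 1 K < j) (hjN : j ≤ N) :
    0 ≤ D2 (splitLast K ε) j ∧
      (D2 (splitLast K ε) j = 0 ↔ j = lastAtMost ε 1 K + 1 ∨ j = N) := by
  rw [splitLast, D2_insertDown_of_lt ε hj hjN]
  have := hε.D2_of_lastAtMost_le hN hK (i := j - 1) (by omega) (by omega)
  omega

lemma IsDyckPath.isDyckPath_splitLast : IsDyckPath (splitLast K ε) := by
  have huN : lastAtMost ε 1 K < N := by have := lastAtMost_le ε 1 K; omega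
  refine ⟨fun j hj => ?_, ((hε.D2_splitLast_of_lt hN hK huN le_rfl).2.mpr (.inr rfl))⟩
  rcases Nat.lt_or_ge (lastAtMost ε 1 K) j with hj' | hj'
  · exact (hε.D2_splitLast_of_lt hN hK hj' hj).1
  · rw [splitLast, D2_insertDown_of_le ε hj' hj]; exact hε.nonneg j hj

lemma IsDyckPath.returns_splitLast :
    returns (splitLast K ε) = insert (lastAtMost ε 1 K + 1) (returns ε) := by
  have huK := lastAtMost_le ε 1 K
  ext j
  simp only [returns, Finset.mem_insert, Finset.mem_filter, Finset.mem_Icc]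
  rcases Nat.lt_or_ge (lastAtMost ε 1 K) j with hj | hj
  · rcases Nat.lt_or_ge N j with hNj | hjN
    · omega
    have := hε.D2_splitLast_of_lt hN hK hj hjN
    rcases hjN.lt_or_eq with hjN | rfl
    · have := hε.D2_of_lastAtMost_le hN hK hj.le (by omega)
      omega
    · have := hε.D2_length
      omega
  · rw [splitLast, D2_insertDown_of_le ε hj (by omega)]
    omega

lemma IsDyckPath.card_returns_splitLast :
    (returns (splitLast K ε)).card = (returns ε).card + 1 := by
  obtain ⟨-, huK, -⟩ := hε.D2_lastAtMost_one hN hK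
  rw [hε.returns_splitLast hN hK, Finset.card_insert_of_notMem]
  have := hε.D2_of_lastAtMost_le hN hK (i := lastAtMost ε 1 K + 1) (by omega) (by omega)
  simp only [returns, Finset.mem_filter]
  omega

lemma IsDyckPath.mergeLast_splitLast : mergeLast K (splitLast K ε) = ε := by
  obtain ⟨-, huK, -⟩ := hε.D2_lastAtMost_one hN hK
  have hlast : lastAtMost (splitLast K ε) 0 (K + 1) = lastAtMost ε 1 K + 1 := by
    refine lastAtMost_eq (by omega) ?_ fun j hj hjK => ?_
    · exact ((hε.D2_splitLast_of_lt hN hK (by omega) (by omega)).2.mpr (.inl rfl)).le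
    · have := hε.D2_splitLast_of_lt hN hK (j := j) (by omega) (by omega)
      omega
  rw [mergeLast, hlast, Nat.add_sub_cancel, splitLast,
    eraseStep_insertDown ε (by omega) (hε.last_eq_one (by omega))]

end SplitLast

section MergeLast

variable {K : ℕ} {η : Fin N → Fin 2} (hN : N = K + 2) (hη : IsDyckPath η)
  (hret : ∃ j ∈ returns η, j < N)
include hN hη hret

lemma IsDyckPath.lastAtMost_zero :
    1 ≤ lastAtMost η 0 (K + 1) ∧ D2 η (lastAtMost η 0 (K + 1)) = 0 := by
  obtain ⟨j, hj, hjN⟩ := hret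
  simp only [returns, Finset.mem_filter, Finset.mem_Icc] at hj
  have := le_lastAtMost (c := 0) (K := K + 1) (by omega) hj.2.le
  have := D2_lastAtMost_le (ε := η) (K := K + 1) le_rfl
  have := hη.nonneg _ ((lastAtMost_le η 0 (K + 1)).trans (by omega))
  omega

lemma IsDyckPath.insertDown_mergeLast :
    insertDown (mergeLast K η) (lastAtMost η 0 (K + 1) - 1) = η := by
  obtain ⟨ht1, ht⟩ := hη.lastAtMost_zero hN hret
  have htK := lastAtMost_le η 0 (K + 1)
  refine insertDown_eraseStep η (by omega) (hη.eq_one_of_D2_succ_eq_zero (by omega) ?_)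
  rwa [Nat.sub_add_cancel ht1]

lemma IsDyckPath.D2_mergeLast {i : ℕ} (hi : i ≤ K + 1) :
    D2 (mergeLast K η) i = if i < lastAtMost η 0 (K + 1) then D2 η i else D2 η (i + 1) + 1 := by
  obtain ⟨ht1, -⟩ := hη.lastAtMost_zero hN hret
  have hins := hη.insertDown_mergeLast hN hret
  split_ifs with hit
  · conv_rhs => rw [← hins]
    rw [D2_insertDown_of_le _ (by omega) (by omega)]
  · conv_rhs => rw [← hins]
    rw [D2_insertDown_succ _ (by omega) (by omega)]
    ring

lemma IsDyckPath.D2_mergeLast_length : D2 (mergeLast K η) N = 0 := by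
  have htK := lastAtMost_le η 0 (K + 1)
  subst hN
  rw [D2_succ_of_eq_one (ε := mergeLast K η) (j := K + 1) (hj := by omega)
      (by exact eraseStep_last η (by omega) _),
    hη.D2_mergeLast rfl hret le_rfl, if_neg (by omega), hη.D2_length]
  ring

lemma IsDyckPath.isDyckPath_mergeLast : IsDyckPath (mergeLast K η) := by
  refine ⟨fun j hj => ?_, hη.D2_mergeLast_length hN hret⟩
  rcases hj.lt_or_eq with hj | rfl
  · rw [hη.D2_mergeLast hN hret (by omega)]
    split_ifs
    · exact hη.nonneg j (by omega)
    · have := hη.nonneg (j + 1) (by omega)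
      omega
  · exact (hη.D2_mergeLast_length hN hret).ge

lemma IsDyckPath.D2_mergeLast_ne_zero : D2 (mergeLast K η) K ≠ 0 := by
  obtain ⟨-, ht⟩ := hη.lastAtMost_zero hN hret
  have htK := lastAtMost_le η 0 (K + 1)
  rw [hη.D2_mergeLast hN hret (by omega)]
  split_ifs with hKt
  · rw [show K = lastAtMost η 0 (K + 1) - 1 by omega,
      hη.D2_eq_one_of_D2_succ_eq_zero (by omega) (by rwa [Nat.sub_add_cancel (by omega)])]
    decide
  · have := hη.nonneg (K + 1) (by omega)
    omega

lemma IsDyckPath.splitLast_mergeLast : splitLast K (mergeLast K η) = η := by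
  obtain ⟨ht1, ht⟩ := hη.lastAtMost_zero hN hret
  have htK := lastAtMost_le η 0 (K + 1)
  have hd : lastAtMost (mergeLast K η) 1 K = lastAtMost η 0 (K + 1) - 1 := by
    refine lastAtMost_eq (by omega) ?_ fun j hj hjK => ?_
    · rw [hη.D2_mergeLast hN hret (by omega), if_pos (by omega),
        hη.D2_eq_one_of_D2_succ_eq_zero (by omega) (by rwa [Nat.sub_add_cancel ht1])]
    · rw [hη.D2_mergeLast hN hret (by omega), if_neg (by omega)]
      have := lt_D2_of_lastAtMost_lt (ε := η) (c := 0) (K := K + 1) (j := j + 1)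
        (by omega) (by omega)
      omega
  rw [splitLast, hd, hη.insertDown_mergeLast hN hret]

end MergeLast

lemma exists_mem_returns_lt {ε : Fin N → Fin 2} (h : 1 < (returns ε).card) :
    ∃ j ∈ returns ε, j < N := by
  obtain ⟨a, ha, b, hb, hab⟩ := Finset.one_lt_card.mp h
  have haN : a ≤ N := (Finset.mem_Icc.mp (Finset.mem_filter.mp ha).1).2
  have hbN : b ≤ N := (Finset.mem_Icc.mp (Finset.mem_filter.mp hb).1).2
  rcases haN.lt_or_eq with haN | rfl
  exacts [⟨a, ha, haN⟩, ⟨b, hb, by omega⟩]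

lemma card_filter_H2_D2_ne_zero (m n : ℕ) :
    ((H2 (m + 1) (n + 1)).filter fun ε => D2 ε (2 * m) ≠ 0).card =
      (H2 (m + 1) (n + 2)).card := by
  have hN : 2 * (m + 1) = 2 * m + 2 := by ring
  refine Finset.card_nbij' (splitLast (2 * m)) (mergeLast (2 * m)) (fun ε hε => ?_)
    (fun η hη => ?_) (fun ε hε => ?_) (fun η hη => ?_)
  · simp only [Finset.mem_coe, Finset.mem_filter, mem_H2] at hε ⊢
    obtain ⟨⟨hε, hret⟩, hK⟩ := hε
    exact ⟨hε.isDyckPath_splitLast hN hK, by rw [hε.card_returns_splitLast hN hK, hret]⟩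
  · simp only [Finset.mem_coe, Finset.mem_filter, mem_H2] at hη ⊢
    obtain ⟨hη, hret⟩ := hη
    have hlt := exists_mem_returns_lt (by omega : 1 < (returns η).card)
    have hK := hη.D2_mergeLast_ne_zero hN hlt
    have hε := hη.isDyckPath_mergeLast hN hlt
    have := hε.card_returns_splitLast hN hK
    rw [hη.splitLast_mergeLast hN hlt] at this
    exact ⟨⟨hε, by omega⟩, hK⟩
  · simp only [Finset.mem_coe, Finset.mem_filter, mem_H2] at hε
    exact hε.1.1.mergeLast_splitLast hN hε.2
  · simp only [Finset.mem_coe, mem_H2] at hη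
    exact hη.1.splitLast_mergeLast hN (exists_mem_returns_lt (by omega))

theorem card_H2_recurrence_general (m n : ℕ) :
    (H2 (m + 1) (n + 2)).card + (H2 m n).card = (H2 (m + 1) (n + 1)).card := by
  rw [← card_filter_H2_D2_ne_zero, ← card_filter_H2_D2_eq_zero, add_comm]
  exact Finset.card_filter_add_card_filter_not _

/-- For all `m, n ≥ 1`,
`card(Ĥ²_{m+1,n+2}) + card(Ĥ²_{m,n}) = card(Ĥ²_{m+1,n+1})`. -/
theorem card_H2_recurrence (m n : ℕ) (hm : 1 ≤ m) (hn : 1 ≤ n) :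
    (H2 (m + 1) (n + 2)).card + (H2 m n).card = (H2 (m + 1) (n + 1)).card :=
  card_H2_recurrence_general m n
end

section
/- For every n ≥ 1, the sum ∑_{m=n}^∞ card(Ĥ²_{m,n}) / 2^{2m−n} equals 1. -/
/-!
Reading `0` as an up-step `U` and `1` as a down-step `D`, `Ĥ²_{m,n}` is the set of Dyck words of
semilength `m` with exactly `n` returns to the axis: a path that stays `≥ 0` can only return by a
down-step, so the condition `ε_j = 1` at the returns is automatic. Cutting a nonempty Dyck word at
its first return, `p = nest q + r`, gives `c(m+1, n+1) = ∑_{i+j=m} C_i c(j, n)` for the number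
`c(m, n)` of such words, so the series `F_n = ∑_m c(m, n) / 4^m` satisfy `F_0 = 1` and
`F_{n+1} = F_n / 4 · ∑_i C_i / 4^i`. The Catalan series at `1/4` telescopes to `2`, because
`C_k / 4^k = 2 (b_k - b_{k+1})` with `b_k = binom(2k, k) / 4^k → 0`; hence `F_n = 2^{-n}`.
-/

open scoped Classical

open DyckStep Finset Filter Topology

lemma List.count_take_ofFn {α : Type*} [DecidableEq α] {N : ℕ} (f : Fin N → α) (j : ℕ)
    (a : α) :
    ((List.ofFn f).take j).count a = #{i : Fin N | (i : ℕ) < j ∧ f i = a} := by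
  have hcount (l : List α) : l.count a = (l.map fun x => if x = a then 1 else 0).sum := by
    induction l with
    | nil => rfl
    | cons x l ih => by_cases hx : x = a <;> simp [ih, hx, add_comm]
  rw [hcount, List.map_take, List.map_ofFn, List.sum_take_ofFn, card_filter, sum_filter]
  exact sum_congr rfl fun i _ => by by_cases hi : (i : ℕ) < j <;> simp [hi]

lemma List.getElem_eq_D_of_count_take_succ_eq {l : List DyckStep}
    (hl : ∀ i, (l.take i).count D ≤ (l.take i).count U) {i : ℕ} (hi : i < l.length)
    (h : (l.take (i + 1)).count U = (l.take (i + 1)).count D) : l[i] = D := by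
  rw [List.take_add_one, List.getElem?_eq_getElem hi] at h
  have := hl i
  cases hs : l[i]
  · simp [hs] at h
    omega
  · rfl

theorem hasSum_sum_antidiagonal_of_nonneg {f g : ℕ → ℝ} {s t : ℝ} (hf : HasSum f s)
    (hg : HasSum g t) (hf0 : 0 ≤ f) (hg0 : 0 ≤ g) :
    HasSum (fun n => ∑ kl ∈ antidiagonal n, f kl.1 * g kl.2) (s * t) := by
  have hfg := hf.summable.mul_of_nonneg hg.summable hf0 hg0
  rw [(summable_sum_mul_antidiagonal_of_summable_mul hfg).hasSum_iff,
    ← hf.summable.tsum_mul_tsum_eq_tsum_sum_antidiagonal hg.summable hfg, hf.tsum_eq, hg.tsum_eq]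

namespace Nat

lemma centralBinom_div_four_pow_succ (k : ℕ) :
    (centralBinom (k + 1) : ℝ) / 4 ^ (k + 1) =
      centralBinom k / 4 ^ k * (2 * k + 1) / (2 * k + 2) := by
  have h : ((k : ℝ) + 1) * centralBinom (k + 1) = 2 * (2 * k + 1) * centralBinom k := by
    exact_mod_cast succ_mul_centralBinom_succ k
  rw [pow_succ]
  field_simp
  linear_combination 2 * h

lemma sq_centralBinom_div_four_pow_mul_le (k : ℕ) :
    ((centralBinom k : ℝ) / 4 ^ k) ^ 2 * (k + 1) ≤ 1 := by
  induction k with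
  | zero => simp
  | succ k ih =>
    set b := (centralBinom k : ℝ) / 4 ^ k
    rw [centralBinom_div_four_pow_succ, div_pow, mul_pow, div_mul_eq_mul_div,
      div_le_one (by positivity)]
    push_cast
    have : (2 * (k : ℝ) + 1) ^ 2 * (k + 1 + 1) ≤ (2 * k + 2) ^ 2 * (k + 1) := by nlinarith
    nlinarith [mul_le_mul_of_nonneg_left this (sq_nonneg b)]

lemma tendsto_centralBinom_div_four_pow :
    Tendsto (fun k => (centralBinom k : ℝ) / 4 ^ k) atTop (𝓝 0) := by
  have hsq : Tendsto (fun k => ((centralBinom k : ℝ) / 4 ^ k) ^ 2) atTop (𝓝 0) := by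
    refine squeeze_zero (fun _ => by positivity) (fun k => ?_)
      tendsto_one_div_add_atTop_nhds_zero_nat
    rw [le_div_iff₀ (by positivity)]
    exact sq_centralBinom_div_four_pow_mul_le k
  have h := hsq.sqrt
  simp only [Real.sqrt_sq (by positivity : (0 : ℝ) ≤ centralBinom _ / 4 ^ _),
    Real.sqrt_zero] at h
  exact h

lemma catalan_div_four_pow (k : ℕ) : (catalan k : ℝ) / 4 ^ k =
    2 * ((centralBinom k : ℝ) / 4 ^ k - centralBinom (k + 1) / 4 ^ (k + 1)) := by
  have h : ((k : ℝ) + 1) * catalan k = centralBinom k := by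
    exact_mod_cast succ_mul_catalan_eq_centralBinom k
  rw [centralBinom_div_four_pow_succ]
  field_simp
  linear_combination h

theorem hasSum_catalan_div_four_pow : HasSum (fun k => (catalan k : ℝ) / 4 ^ k) 2 := by
  rw [hasSum_iff_tendsto_nat_of_nonneg (fun _ => by positivity)]
  simp_rw [catalan_div_four_pow, ← mul_sum, sum_range_sub']
  simpa using (tendsto_centralBinom_div_four_pow.const_sub 1).const_mul 2

end Nat

namespace DyckWord

variable {p : DyckWord}

def numReturns (p : DyckWord) : ℕ :=
  #{i ∈ range p.toList.length | (p.toList.take (i + 1)).count U = (p.toList.take (i + 1)).count D}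

@[simp]
lemma numReturns_zero : numReturns 0 = 0 := rfl

lemma numReturns_le_length (p : DyckWord) : p.numReturns ≤ p.toList.length :=
  (card_filter_le _ _).trans (card_range _).le

lemma numReturns_add (p q : DyckWord) : (p + q).numReturns = p.numReturns + q.numReturns := by
  have hp := p.count_U_eq_count_D
  have hpq : (p + q).toList = p.toList ++ q.toList := rfl
  simp only [numReturns, card_filter, hpq, List.length_append, sum_range_add]
  congr 1
  · refine sum_congr rfl fun i hi => ?_
    rw [List.take_append_of_le_length (by simpa using hi)]
  · refine sum_congr rfl fun i _ => ?_
    simp only [add_assoc, List.take_length_add_append, List.count_append, hp,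
      Nat.add_left_cancel_iff]

lemma numReturns_nest (p : DyckWord) : p.nest.numReturns = 1 := by
  rw [numReturns, card_eq_one]
  refine ⟨p.nest.firstReturn, eq_singleton_iff_unique_mem.mpr ⟨?_, fun i hi => ?_⟩⟩
  · exact mem_filter.mpr ⟨mem_range.mpr (firstReturn_lt_length nest_ne_zero),
      count_take_firstReturn_add_one nest_ne_zero⟩
  · obtain ⟨hi, hbal⟩ := mem_filter.mp hi
    have hlen : p.nest.toList.length = p.toList.length + 2 := by simp [nest]
    rw [mem_range, hlen] at hi
    rw [firstReturn_nest]
    by_contra hne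
    have hlt : i < p.nest.firstReturn := by rw [firstReturn_nest]; omega
    exact (count_D_lt_count_U_of_lt_firstReturn hlt).ne' hbal

lemma numReturns_eq_outsidePart_add_one (h : p ≠ 0) :
    p.numReturns = p.outsidePart.numReturns + 1 := by
  conv_lhs => rw [← nest_insidePart_add_outsidePart h]
  rw [numReturns_add, numReturns_nest, add_comm]

lemma numReturns_eq_zero_iff : p.numReturns = 0 ↔ p = 0 := by
  refine ⟨fun h => ?_, fun h => h ▸ numReturns_zero⟩
  by_contra hp
  rw [numReturns_eq_outsidePart_add_one hp] at h
  exact Nat.succ_ne_zero _ h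

lemma semilength_eq_zero_iff : p.semilength = 0 ↔ p = 0 := by
  rw [← toList_eq_nil, ← List.length_eq_zero_iff, ← two_mul_semilength_eq_length]
  omega

def ofSemilength (m : ℕ) : Finset DyckWord :=
  univ.map (Function.Embedding.subtype fun p : DyckWord => p.semilength = m)

@[simp]
lemma mem_ofSemilength {m : ℕ} : p ∈ ofSemilength m ↔ p.semilength = m := by
  simp [ofSemilength]

lemma card_ofSemilength (m : ℕ) : #(ofSemilength m) = catalan m := by
  rw [ofSemilength, card_map, card_univ, card_dyckWord_semilength_eq_catalan]

def withReturns (m n : ℕ) : Finset DyckWord := {p ∈ ofSemilength m | p.numReturns = n}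

@[simp]
lemma mem_withReturns {m n : ℕ} :
    p ∈ withReturns m n ↔ p.semilength = m ∧ p.numReturns = n := by
  rw [withReturns, mem_filter, mem_ofSemilength]

lemma withReturns_zero_right (m : ℕ) : withReturns m 0 = if m = 0 then {0} else ∅ := by
  ext p
  rw [mem_withReturns, numReturns_eq_zero_iff]
  split_ifs with hm
  · simp [hm, semilength_eq_zero_iff]
  · simp only [notMem_empty, iff_false, not_and]
    rintro rfl rfl
    exact hm rfl

lemma withReturns_zero_succ (n : ℕ) : withReturns 0 (n + 1) = ∅ := by
  ext p
  simp only [mem_withReturns, semilength_eq_zero_iff, notMem_empty, iff_false, not_and]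
  rintro rfl
  simp

lemma withReturns_eq_empty {m n : ℕ} (h : 2 * m < n) : withReturns m n = ∅ := by
  ext p
  simp only [mem_withReturns, notMem_empty, iff_false, not_and]
  rintro rfl rfl
  have := p.numReturns_le_length
  rw [← two_mul_semilength_eq_length] at this
  omega

theorem card_withReturns_succ_succ (m n : ℕ) :
    #(withReturns (m + 1) (n + 1)) =
      ∑ ij ∈ antidiagonal m, catalan ij.1 * #(withReturns ij.2 n) := by
  simp_rw [← card_ofSemilength, ← card_product, ← card_sigma]
  refine card_nbij' (fun p => ⟨(p.insidePart.semilength, p.outsidePart.semilength),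
      (p.insidePart, p.outsidePart)⟩) (fun x => x.2.1.nest + x.2.2) ?_ ?_ ?_ ?_
  · intro p hp
    obtain ⟨hm, hn⟩ := mem_withReturns.mp hp
    have h0 : p ≠ 0 := by rintro rfl; simp at hm
    have := semilength_insidePart_add_semilength_outsidePart_add_one h0
    simp only [coe_sigma, Set.mem_sigma_iff, mem_coe, HasAntidiagonal.mem_antidiagonal, mem_product,
      mem_ofSemilength, mem_withReturns, true_and]
    refine ⟨by omega, ?_⟩
    rw [numReturns_eq_outsidePart_add_one h0] at hn
    omega
  · rintro ⟨⟨i, j⟩, q, r⟩ hx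
    simp only [coe_sigma, Set.mem_sigma_iff, mem_coe, HasAntidiagonal.mem_antidiagonal, mem_product,
      mem_ofSemilength, mem_withReturns] at hx ⊢
    obtain ⟨hij, hq, hr, hn⟩ := hx
    simp only [semilength_add, semilength_nest, numReturns_add, numReturns_nest]
    omega
  · intro p hp
    have h0 : p ≠ 0 := by rintro rfl; simp at hp
    exact nest_insidePart_add_outsidePart h0
  · rintro ⟨⟨i, j⟩, q, r⟩ hx
    simp only [coe_sigma, Set.mem_sigma_iff, mem_coe, HasAntidiagonal.mem_antidiagonal, mem_product,
      mem_ofSemilength, mem_withReturns] at hx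
    obtain ⟨-, rfl, rfl, -⟩ := hx
    simp [insidePart_add nest_ne_zero, outsidePart_add nest_ne_zero]

theorem hasSum_card_withReturns_div_four_pow (n : ℕ) :
    HasSum (fun m => (#(withReturns m n) : ℝ) / 4 ^ m) (2 ^ n)⁻¹ := by
  induction n with
  | zero =>
    simp_rw [withReturns_zero_right, apply_ite card, card_singleton, card_empty, pow_zero,
      inv_one]
    convert hasSum_ite_eq 0 (1 : ℝ) using 2 with m
    split_ifs <;> simp_all
  | succ n ih =>
    have hrec : (fun m => (#(withReturns (m + 1) (n + 1)) : ℝ) / 4 ^ (m + 1)) =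
        fun m => 4⁻¹ * ∑ ij ∈ antidiagonal m,
          (catalan ij.1 : ℝ) / 4 ^ ij.1 * (#(withReturns ij.2 n) / 4 ^ ij.2) := by
      ext m
      rw [card_withReturns_succ_succ, Nat.cast_sum, sum_div, mul_sum]
      refine sum_congr rfl fun ij hij => ?_
      rw [← mem_antidiagonal.mp hij]
      push_cast
      field_simp
      ring
    rw [← hasSum_nat_add_iff' 1]
    simp only [range_one, sum_singleton, withReturns_zero_succ, card_empty,
      Nat.cast_zero, zero_div, sub_zero, hrec]
    have h := (hasSum_sum_antidiagonal_of_nonneg Nat.hasSum_catalan_div_four_pow ih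
      (fun _ => by positivity) (fun _ => by positivity)).mul_left 4⁻¹
    rwa [show (4 : ℝ)⁻¹ * (2 * (2 ^ n)⁻¹) = (2 ^ (n + 1))⁻¹ by ring] at h

end DyckWord

def finTwoEquivDyckStep : Fin 2 ≃ DyckStep where
  toFun b := if b = 0 then U else D
  invFun s := match s with
    | U => 0
    | D => 1
  left_inv b := by fin_cases b <;> rfl
  right_inv s := by cases s <;> rfl

def toDyckSteps {N : ℕ} (ε : Fin N → Fin 2) : List DyckStep :=
  List.ofFn (finTwoEquivDyckStep ∘ ε)

@[simp]
lemma length_toDyckSteps {N : ℕ} (ε : Fin N → Fin 2) : (toDyckSteps ε).length = N :=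
  List.length_ofFn

lemma D2_eq_count_sub_count {N : ℕ} (ε : Fin N → Fin 2) (j : ℕ) :
    D2 ε j = ((toDyckSteps ε).take j).count U - ((toDyckSteps ε).take j).count D := by
  simp only [D2, toDyckSteps, List.count_take_ofFn, Function.comp_apply,
    ← Equiv.eq_symm_apply]
  rfl

lemma isLeadingHump_iff_s18 (m : ℕ) (ε : Fin (2 * m) → Fin 2) :
    IsLeadingHump m ε ↔ (toDyckSteps ε).count U = (toDyckSteps ε).count D ∧
      ∀ i, ((toDyckSteps ε).take i).count D ≤ ((toDyckSteps ε).take i).count U := by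
  have htake (i : ℕ) (hi : 2 * m ≤ i) : (toDyckSteps ε).take i = toDyckSteps ε :=
    List.take_of_length_le (by simpa using hi)
  simp only [IsLeadingHump, D2_eq_count_sub_count, htake _ le_rfl, sub_nonneg, sub_eq_zero,
    Nat.cast_le, Nat.cast_inj]
  constructor
  · rintro ⟨hnonneg, hbal, -⟩
    refine ⟨hbal, fun i => ?_⟩
    rcases Nat.eq_zero_or_pos i with rfl | hi
    · simp
    rcases le_or_gt i (2 * m) with hi' | hi'
    · exact hnonneg i hi hi'
    · rw [htake i hi'.le, hbal]
  · rintro ⟨hbal, hnonneg⟩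
    refine ⟨fun j _ _ => hnonneg j, hbal, fun j hj hj' h => ?_⟩
    have hD := List.getElem_eq_D_of_count_take_succ_eq hnonneg
      (i := j - 1) (by simp; omega) (by rwa [Nat.sub_add_cancel hj])
    simp only [toDyckSteps, List.getElem_ofFn, Function.comp_apply, ← Equiv.eq_symm_apply] at hD
    exact hD

lemma card_filter_D2_eq_zero {N : ℕ} (ε : Fin N → Fin 2) :
    #{j ∈ Icc 1 N | D2 ε j = 0} = #{i ∈ range (toDyckSteps ε).length |
      ((toDyckSteps ε).take (i + 1)).count U = ((toDyckSteps ε).take (i + 1)).count D} := by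
  refine card_nbij' (· - 1) (· + 1) ?_ ?_ ?_ ?_ <;> intro j hj <;>
    simp only [coe_filter, Set.mem_ofPred_eq, mem_Icc, mem_range, length_toDyckSteps,
      D2_eq_count_sub_count, sub_eq_zero, Nat.cast_inj] at hj ⊢
  · rw [Nat.sub_add_cancel hj.1.1]; exact ⟨by omega, hj.2⟩
  · exact ⟨by omega, hj.2⟩
  · omega
  · omega

lemma toDyckSteps_symm_getElem {N : ℕ} (l : List DyckStep) (h : l.length = N) :
    toDyckSteps (fun k : Fin N => finTwoEquivDyckStep.symm (l[k]'(h ▸ k.2))) = l :=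
  List.ext_getElem (by simp [h]) fun i _ _ => by simp [toDyckSteps]

theorem card_H2_eq_card_withReturns (m n : ℕ) : #(H2 m n) = #(DyckWord.withReturns m n) := by
  have mem_H2 (ε : Fin (2 * m) → Fin 2) :
      ε ∈ H2 m n ↔ IsLeadingHump m ε ∧ #{j ∈ Icc 1 (2 * m) | D2 ε j = 0} = n := by
    simp [H2]
  have isDyck (ε : Fin (2 * m) → Fin 2) (hε : ε ∈ H2 m n) :=
    (isLeadingHump_iff_s18 m ε).mp ((mem_H2 ε).mp hε).1
  have length_eq {p : DyckWord} (hp : p ∈ DyckWord.withReturns m n) :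
      p.toList.length = 2 * m := by
    rw [← p.two_mul_semilength_eq_length, (DyckWord.mem_withReturns.mp hp).1]
  refine card_bij' (fun ε hε => ⟨toDyckSteps ε, (isDyck ε hε).1, (isDyck ε hε).2⟩)
    (fun p hp k => finTwoEquivDyckStep.symm (p.toList[k]'((length_eq hp).symm ▸ k.2)))
    ?_ ?_ ?_ ?_
  · intro ε hε
    refine DyckWord.mem_withReturns.mpr
      ⟨?_, (card_filter_D2_eq_zero ε).symm.trans ((mem_H2 ε).mp hε).2⟩
    have h := DyckWord.two_mul_semilength_eq_length
      (p := ⟨toDyckSteps ε, (isDyck ε hε).1, (isDyck ε hε).2⟩)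
    simp only [length_toDyckSteps] at h
    omega
  · intro p hp
    rw [mem_H2, isLeadingHump_iff_s18, card_filter_D2_eq_zero,
      toDyckSteps_symm_getElem _ (length_eq hp)]
    exact ⟨⟨p.count_U_eq_count_D, p.count_D_le_count_U⟩, (DyckWord.mem_withReturns.mp hp).2⟩
  · intro ε _
    ext k
    simp [toDyckSteps]
  · intro p hp
    exact DyckWord.ext (toDyckSteps_symm_getElem _ (length_eq hp))

theorem tsum_card_H2_div_pow_general (n : ℕ) :
    ∑' m : ℕ, ((H2 m n).card : ℝ) / 2 ^ (2 * m - n) = 1 := by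
  have hterm (m : ℕ) : ((H2 m n).card : ℝ) / 2 ^ (2 * m - n) =
      2 ^ n * ((#(DyckWord.withReturns m n) : ℝ) / 4 ^ m) := by
    rw [card_H2_eq_card_withReturns]
    rcases le_or_gt n (2 * m) with h | h
    · rw [show (4 : ℝ) ^ m = 2 ^ (2 * m - n) * 2 ^ n by
        rw [← pow_add, Nat.sub_add_cancel h, pow_mul]; norm_num]
      field_simp
    · simp [DyckWord.withReturns_eq_empty h]
  rw [tsum_congr hterm, tsum_mul_left, (DyckWord.hasSum_card_withReturns_div_four_pow n).tsum_eq,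
    mul_inv_cancel₀ (by positivity)]

/-- For every `n ≥ 1`, `∑_{m} card(Ĥ²_{m,n}) / 2^{2m−n} = 1`
(the terms with `m < n` vanish since `Ĥ²_{m,n}` is then empty). -/
theorem tsum_card_H2_div_pow (n : ℕ) (hn : 1 ≤ n) :
    ∑' m : ℕ, ((H2 m n).card : ℝ) / 2 ^ (2 * m - n) = 1 :=
  tsum_card_H2_div_pow_general n
end
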